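/- For any set-valued function f : X → 𝒫(Z), the set of M_f-affine minorants of f coincides with the set of M_{K-eco f}-affine minorants of K-eco f; that is, H_f = H_{K-eco f}. -/

import Mathlib

open scoped Classical Pointwise
noncomputable section

variable {X : Type*} [AddCommGroup X] [Module ℝ X] [TopologicalSpace X]
  [IsTopologicalAddGroup X] [ContinuousSMul ℝ X]
variable {Z : Type*} [AddCommGroup Z] [Module ℝ Z] [TopologicalSpace Z]
  [IsTopologicalAddGroup Z] [ContinuousSMul ℝ Z]

/-- A set is evenly convex (e-convex) if it is the intersection of an arbitrary
(possibly empty) family of open half-spaces. -/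
def IsEConvex {Y : Type*} [AddCommGroup Y] [Module ℝ Y] [TopologicalSpace Y]
    (C : Set Y) : Prop :=
  ∃ S : Set ((Y →L[ℝ] ℝ) × ℝ), C = ⋂ p ∈ S, {y | p.1 y < p.2}

/-- The evenly convex hull of `C`: the smallest e-convex set containing `C`. -/
def eco {Y : Type*} [AddCommGroup Y] [Module ℝ Y] [TopologicalSpace Y]
    (C : Set Y) : Set Y :=
  ⋂₀ {D : Set Y | IsEConvex D ∧ C ⊆ D}

/-- The negative polar cone of `K`. -/
def negPolar (K : Set Z) : Set (Z →L[ℝ] ℝ) := {z' | ∀ z ∈ K, z' z ≤ 0}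

/-- `S_{(x*,z*)}(x) = {z | ⟨x,x*⟩ + ⟨z,z*⟩ < 0}`. -/
def Sopen (x' : X →L[ℝ] ℝ) (z' : Z →L[ℝ] ℝ) (x : X) : Set Z := {z | x' x + z' z < 0}

/-- `S̄_{(x*,z*)}(x) = {z | ⟨x,x*⟩ + ⟨z,z*⟩ ≤ 0}`. -/
def Sclosed (x' : X →L[ℝ] ℝ) (z' : Z →L[ℝ] ℝ) (x : X) : Set Z := {z | x' x + z' z ≤ 0}

/-- Effective domain of a set-valued function. -/
def svDom (f : X → Set Z) : Set X := {x | f x ≠ ∅}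

/-- A set-valued function is proper if its domain is nonempty and no value is all of `Z`. -/
def SVProper (f : X → Set Z) : Prop := svDom f ≠ ∅ ∧ ∀ x, f x ≠ Set.univ

/-- The `K`-epigraph of a set-valued function. -/
def epiK (K : Set Z) (f : X → Set Z) : Set (X × Z) := {p | p.2 ∈ f p.1 + K}

/-- `f` is `K`-e-convex if its `K`-epigraph is e-convex. -/
def IsKEConvex (K : Set Z) (f : X → Set Z) : Prop := IsEConvex (epiK K f)

/-- The `K`-e-convex hull of `f`. -/
def KEco (K : Set Z) (f : X → Set Z) : X → Set Z := fun x => {z | (x, z) ∈ eco (epiK K f)}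

/-- `g` is a (set-valued) minorant of `f`: `g(x) ≤_K f(x)`, i.e. `f(x)+K ⊆ g(x)+K`. -/
def IsMinorant (K : Set Z) (f g : X → Set Z) : Prop := ∀ x, f x + K ⊆ g x + K

/-- A `C`-affine set-valued function. -/
def IsCAffine (K : Set Z) (C : Set X) (a : X → Set Z) : Prop :=
  ∃ x' : X →L[ℝ] ℝ, ∃ z' ∈ negPolar K \ {0}, ∃ zt : Z,
    ∀ x, a x = if x ∈ C then Sopen x' z' x + {zt} else ∅

/-- `M_f = eco (dom f)`. -/
def Mf (f : X → Set Z) : Set X := eco (svDom f)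

/-- The set of all `M_f`-affine minorants of `f`. -/
def Hf (K : Set Z) (f : X → Set Z) : Set (X → Set Z) :=
  {a | IsCAffine K (Mf f) a ∧ IsMinorant K f a}

/-- A 𝒞-affine set-valued function: `C`-affine for some e-convex `C`. -/
def IsCalAffine (K : Set Z) (a : X → Set Z) : Prop :=
  ∃ C : Set X, IsEConvex C ∧ IsCAffine K C a

/-- The set of all 𝒞-affine minorants of `f`. -/
def Cf (K : Set Z) (f : X → Set Z) : Set (X → Set Z) :=
  {a | IsCalAffine K a ∧ IsMinorant K f a}

/-- An e-affine set-valued function. -/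
def IsEAffine (K : Set Z) (a : X → Set Z) : Prop :=
  ∃ x' y' : X →L[ℝ] ℝ, ∃ z' ∈ negPolar K \ {0}, ∃ zt : Z, ∃ α : ℝ,
    ∀ x, a x = if y' x < α then Sopen x' z' x + {zt} else ∅

/-- The set of all e-affine minorants of `f`. -/
def Ef (K : Set Z) (f : X → Set Z) : Set (X → Set Z) :=
  {a | IsEAffine K a ∧ IsMinorant K f a}

/-- The modified negation of a subset of `Z`: `-∅ = Z`, `-Z = ∅`,
and the pointwise negation otherwise. -/
def negSet (A : Set Z) : Set Z :=
  if A = ∅ then Set.univ else if A = Set.univ then ∅ else -A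

/-- The c-conjugate of a set-valued function `f`, defined (by `∅`-extension) on
`X* × X* × Z* × ℝ`; its meaningful domain is `X* × X* × (K*∖{0}) × ℝ`. -/
def cConj (K : Set Z) (f : X → Set Z)
    (w : (X →L[ℝ] ℝ) × (X →L[ℝ] ℝ) × (Z →L[ℝ] ℝ) × ℝ) : Set Z :=
  if w.2.2.1 ∈ negPolar K \ {0} ∧ svDom f ⊆ {x | w.2.1 x < w.2.2.2} then
    negSet (eco (⋃ x : X, (f x + Sclosed w.1 w.2.2.1 (-x))))
  else ∅

/-- The c'-conjugate of `g : X* × X* × Z* × ℝ → 𝒫(Z)`. -/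
def cPrimeConj (g : (X →L[ℝ] ℝ) × (X →L[ℝ] ℝ) × (Z →L[ℝ] ℝ) × ℝ → Set Z)
    (x : X) : Set Z :=
  if ∀ w : (X →L[ℝ] ℝ) × (X →L[ℝ] ℝ) × (Z →L[ℝ] ℝ) × ℝ, g w ≠ ∅ → w.2.1 x < w.2.2.2 then
    ⋂ w ∈ {w : (X →L[ℝ] ℝ) × (X →L[ℝ] ℝ) × (Z →L[ℝ] ℝ) × ℝ | g w ≠ ∅},
      (Sclosed w.1 w.2.2.1 x + negSet (g w))
  else ∅

/-- The support function of the `K`-epigraph of `f` relative to open half-spaces,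
with values in `ℝ ∪ {±∞}`. -/
def sigmaF (K : Set Z) (f : X → Set Z)
    (w : (X →L[ℝ] ℝ) × (X →L[ℝ] ℝ) × (Z →L[ℝ] ℝ) × ℝ) : EReal :=
  if svDom f ⊆ {x | w.2.1 x < w.2.2.2} then
    ⨆ p ∈ epiK K f, ((w.1 p.1 + w.2.2.1 p.2 : ℝ) : EReal)
  else ⊤

/-- `η_C(x*,z*)`: `0` if the supremum of `⟨x,x*⟩+⟨z,z*⟩` over `C` is not attained
(every value is strictly below the supremum), `1` otherwise. -/
def etaSet (C : Set (X × Z)) (x' : X →L[ℝ] ℝ) (z' : Z →L[ℝ] ℝ) : ℕ :=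
  if ∀ p ∈ C, ((x' p.1 + z' p.2 : ℝ) : EReal) < ⨆ q ∈ C, ((x' q.1 + z' q.2 : ℝ) : EReal)
  then 0 else 1

/-!
An `M_f`-affine function `a` with data `(x*, z*, z̃)` is a minorant of `f` exactly when
`epi_K f` lies in the open half-space `{(x, z) | ⟨x, x*⟩ + ⟨z, z*⟩ < ⟨z̃, z*⟩}`, because `z* ∈ K*`.
Open half-spaces are e-convex, so the inclusion passes to `eco (epi_K f)`, which is the graph of
`K-eco f`. Moreover `dom f ⊆ dom (K-eco f) ⊆ M_f`, hence `M_{K-eco f} = M_f`.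
-/

section EvenlyConvex

variable {Y W : Type*} [AddCommGroup Y] [Module ℝ Y] [TopologicalSpace Y]
  [AddCommGroup W] [Module ℝ W] [TopologicalSpace W]

lemma subset_eco (C : Set Y) : C ⊆ eco C := fun _ hy =>
  Set.mem_sInter.2 fun _ hD => hD.2 hy

lemma IsEConvex.eco_subset {C D : Set Y} (hD : IsEConvex D) (h : C ⊆ D) : eco C ⊆ D :=
  Set.sInter_subset_of_mem ⟨hD, h⟩

lemma isEConvex_setOf_lt (φ : Y →L[ℝ] ℝ) (α : ℝ) : IsEConvex {y | φ y < α} :=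
  ⟨{(φ, α)}, by simp⟩

lemma eco_eq_iInter_halfspaces (C : Set Y) :
    eco C = ⋂ p ∈ {p : (Y →L[ℝ] ℝ) × ℝ | C ⊆ {y | p.1 y < p.2}}, {y | p.1 y < p.2} := by
  refine subset_antisymm
    (IsEConvex.eco_subset ⟨_, rfl⟩ fun y hy => Set.mem_iInter₂.2 fun p hp => hp hy) ?_
  rintro y hy D ⟨⟨S, rfl⟩, hCD⟩
  exact Set.mem_iInter₂.2 fun p hp =>
    Set.mem_iInter₂.1 hy p fun c hc => Set.mem_iInter₂.1 (hCD hc) p hp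

lemma isEConvex_eco (C : Set Y) : IsEConvex (eco C) := ⟨_, eco_eq_iInter_halfspaces C⟩

lemma eco_mono {C D : Set Y} (h : C ⊆ D) : eco C ⊆ eco D :=
  (isEConvex_eco D).eco_subset (h.trans (subset_eco D))

lemma IsEConvex.preimage {D : Set Y} (hD : IsEConvex D) (L : W →L[ℝ] Y) :
    IsEConvex (L ⁻¹' D) := by
  obtain ⟨S, rfl⟩ := hD
  refine ⟨(fun p => (p.1.comp L, p.2)) '' S, ?_⟩
  ext w
  simp only [Set.preimage_iInter, Set.preimage_ofPred_eq, Set.biInter_image,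
    ContinuousLinearMap.comp_apply]

end EvenlyConvex

section Minorant

variable {X Z : Type*} [AddCommGroup Z] {K : Set Z} {f g a : X → Set Z}

lemma isMinorant_of_subset (h : ∀ x, f x ⊆ a x) : IsMinorant K f a := fun x =>
  Set.add_subset_add_right (h x)

lemma IsMinorant.mono (h : IsMinorant K g a) (hfg : ∀ x, f x ⊆ g x) : IsMinorant K f a :=
  fun x => (Set.add_subset_add_right (hfg x)).trans (h x)

end Minorant

section SetValued

variable {X Z : Type*} [AddCommGroup X] [Module ℝ X] [TopologicalSpace X]
  [AddCommGroup Z] [Module ℝ Z] [TopologicalSpace Z] {K : Set Z} {C : Set X}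
  {f a : X → Set Z}

lemma subset_KEco (h0 : (0 : Z) ∈ K) (x : X) : f x ⊆ KEco K f x := fun z hz =>
  subset_eco _ (show z ∈ f x + K by simpa using Set.add_mem_add hz h0)

lemma eco_epiK_subset_fst_preimage_Mf : eco (epiK K f) ⊆ Prod.fst ⁻¹' Mf f := by
  refine ((isEConvex_eco _).preimage (ContinuousLinearMap.fst ℝ X Z)).eco_subset ?_
  rintro ⟨x, z⟩ hz
  exact subset_eco _ (Set.nonempty_iff_ne_empty.1 (Set.Nonempty.of_add_left ⟨z, hz⟩))

lemma Mf_KEco (h0 : (0 : Z) ∈ K) : Mf (KEco K f) = Mf f := by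
  refine subset_antisymm ((isEConvex_eco _).eco_subset fun x hx => ?_) (eco_mono fun x hx => ?_)
  · obtain ⟨z, hz⟩ := Set.nonempty_iff_ne_empty.2 hx
    exact eco_epiK_subset_fst_preimage_Mf hz
  · obtain ⟨z, hz⟩ := Set.nonempty_iff_ne_empty.2 hx
    exact Set.nonempty_iff_ne_empty.1 ⟨z, subset_KEco h0 x hz⟩

lemma mem_Sopen_add_singleton {x' : X →L[ℝ] ℝ} {z' : Z →L[ℝ] ℝ} {x : X} {zt w : Z} :
    w ∈ Sopen x' z' x + {zt} ↔ x' x + z' w < z' zt := by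
  rw [Set.add_singleton]
  constructor
  · rintro ⟨s, hs, rfl⟩
    have hs : x' x + z' s < 0 := hs
    rw [map_add]
    linarith
  · intro h
    refine ⟨w - zt, ?_, sub_add_cancel w zt⟩
    show x' x + z' (w - zt) < 0
    rw [map_sub]
    linarith

lemma IsMinorant.epiK_subset {x' : X →L[ℝ] ℝ} {z' : Z →L[ℝ] ℝ} {zt : Z} (h : IsMinorant K f a)
    (hz' : z' ∈ negPolar K) (ha : ∀ x ∈ C, a x = Sopen x' z' x + {zt}) (hdom : svDom f ⊆ C) :
    epiK K f ⊆ {p | x' p.1 + z' p.2 < z' zt} := by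
  rintro ⟨x, z⟩ hz
  have hx : x ∈ C := hdom (Set.nonempty_iff_ne_empty.1 (Set.Nonempty.of_add_left ⟨z, hz⟩))
  obtain ⟨s, hs, k, hk, rfl⟩ := ha x hx ▸ h x hz
  rw [mem_Sopen_add_singleton] at hs
  show x' x + z' (s + k) < z' zt
  linarith [map_add z' s k, hz' k hk]

lemma isMinorant_KEco_iff (h0 : (0 : Z) ∈ K) (hC : Mf f ⊆ C) (ha : IsCAffine K C a) :
    IsMinorant K (KEco K f) a ↔ IsMinorant K f a := by
  obtain ⟨x', z', hz', zt, ha⟩ := ha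
  have ha' : ∀ x ∈ C, a x = Sopen x' z' x + {zt} := fun x hx => by rw [ha x, if_pos hx]
  refine ⟨fun h => h.mono fun x => subset_KEco h0 x, fun h => isMinorant_of_subset fun x w hw => ?_⟩
  have hhalf : eco (epiK K f) ⊆ {p | x' p.1 + z' p.2 < z' zt} :=
    (isEConvex_setOf_lt (x'.coprod z') (z' zt)).eco_subset
      (h.epiK_subset hz'.1 ha' ((subset_eco _).trans hC))
  rw [ha' x (hC (eco_epiK_subset_fst_preimage_Mf hw)), mem_Sopen_add_singleton]
  exact hhalf hw

end SetValued

theorem stmt4_general (K : Set Z) (hK0 : ({0} : Set Z) ⊂ K) (f : X → Set Z) :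
    Hf K f = Hf K (KEco K f) := by
  have h0 : (0 : Z) ∈ K := hK0.subset rfl
  ext a
  simp only [Hf, Set.mem_ofPred_eq, Mf_KEco h0]
  exact and_congr_right fun ha => (isMinorant_KEco_iff h0 le_rfl ha).symm

theorem stmt4 [T2Space X] [LocallyConvexSpace ℝ X] [T2Space Z] [LocallyConvexSpace ℝ Z]
    (K : Set Z) (hKconv : Convex ℝ K) (hKcone : ∀ c : ℝ, 0 < c → c • K ⊆ K)
    (hK0 : ({0} : Set Z) ⊂ K) (hKtop : K ≠ Set.univ)
    (f : X → Set Z) :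
    Hf K f = Hf K (KEco K f) :=
  stmt4_general K hK0 f

end
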